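/- arXiv:2311.16999 — 2 statements merged into one kernel-verified Lean document; each statement's English description precedes it below -/
import Mathlib

section
/- Let Γ : G → R be a partial projective representation with factor set σ. Then for all g, h ∈ G: Γ(g⁻¹)Γ(gh) = 0 if and only if Γ(g)Γ(h) = 0, if and only if Γ(gh)Γ(h⁻¹) = 0. -/
/-!
Since `Γ(1) = 1`, the axiom for `(g, g⁻¹)` gives `Γ(g)Γ(g⁻¹)Γ(g) = σ(g, g⁻¹)Γ(g)`, and
`Γ(g) = 0` when `σ(g, g⁻¹) = 0`. Hence `Γ(g)` can be cancelled through a factor `Γ(g⁻¹)`: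
`Γ(g⁻¹)Γ(g)x = 0` forces `Γ(g)x = 0`, and dually on the right. Each implication of the theorem
is one of the axioms `Γ(g⁻¹)Γ(g)Γ(h) = σ(g,h)Γ(g⁻¹)Γ(gh)` and
`Γ(g)Γ(h)Γ(h⁻¹) = σ(g,h)Γ(gh)Γ(h⁻¹)`, applied to `(g, h)`, `(g⁻¹, gh)` or `(gh, h⁻¹)`, followed by
such a cancellation.
-/

section Cancel

variable {κ R : Type*} [Field κ] [Semiring R] [Algebra κ R] {a b x : R} {s : κ}

theorem mul_eq_zero_of_mul_mul_eq_smul_left (hab : a * b * a = s • a)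
    (hs : s = 0 → a = 0) (h : b * a * x = 0) : a * x = 0 := by
  by_cases hs0 : s = 0
  · rw [hs hs0, zero_mul]
  have : s • (a * x) = 0 := by
    rw [← smul_mul_assoc, ← hab]
    simp only [mul_assoc] at h ⊢
    rw [h, mul_zero]
  exact (smul_eq_zero.mp this).resolve_left hs0

theorem mul_eq_zero_of_mul_mul_eq_smul_right (hab : a * b * a = s • a)
    (hs : s = 0 → a = 0) (h : x * a * b = 0) : x * a = 0 := by
  by_cases hs0 : s = 0
  · rw [hs hs0, mul_zero]
  have : s • (x * a) = 0 := by
    rw [← mul_smul_comm, ← hab, ← mul_assoc, ← mul_assoc, h, zero_mul]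
  exact (smul_eq_zero.mp this).resolve_left hs0

end Cancel

theorem mul_inv_mul_self_eq_smul {κ G R : Type*} [Group G] [Monoid R] [SMul κ R]
    {Γ : G → R} {σ : G → G → κ}
    (h3 : ∀ g h : G, Γ g * Γ h * Γ h⁻¹ = σ g h • (Γ (g * h) * Γ h⁻¹)) (h4 : Γ 1 = 1) (g : G) :
    Γ g * Γ g⁻¹ * Γ g = σ g g⁻¹ • Γ g := by
  simpa only [mul_inv_cancel, h4, inv_inv, one_mul] using h3 g g⁻¹

theorem eq_zero_of_factor_inv_eq_zero {κ G R : Type*} [Zero κ] [Group G] [MulZeroOneClass R]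
    {Γ : G → R} {σ : G → G → κ}
    (h1 : ∀ g h : G, σ g h = 0 → Γ g⁻¹ * Γ (g * h) = 0 ∧ Γ (g * h) * Γ h⁻¹ = 0)
    (h4 : Γ 1 = 1) {g : G} (hg : σ g g⁻¹ = 0) : Γ g = 0 := by
  simpa only [mul_inv_cancel, h4, inv_inv, one_mul] using (h1 g g⁻¹ hg).2

theorem partialProjRep_null_iff_general
    {κ G R : Type*} [Field κ] [Group G] [Ring R] [Algebra κ R]
    (Γ : G → R) (σ : G → G → κ)
    (h1 : ∀ g h : G, σ g h = 0 → Γ g⁻¹ * Γ (g * h) = 0 ∧ Γ (g * h) * Γ h⁻¹ = 0)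
    (h2 : ∀ g h : G, Γ g⁻¹ * Γ g * Γ h = σ g h • (Γ g⁻¹ * Γ (g * h)))
    (h3 : ∀ g h : G, Γ g * Γ h * Γ h⁻¹ = σ g h • (Γ (g * h) * Γ h⁻¹))
    (h4 : Γ 1 = 1) :
    ∀ g h : G, (Γ g⁻¹ * Γ (g * h) = 0 ↔ Γ g * Γ h = 0) ∧
      (Γ g * Γ h = 0 ↔ Γ (g * h) * Γ h⁻¹ = 0) := by
  have cancel_left (k : G) {x : R} : Γ k⁻¹ * Γ k * x = 0 → Γ k * x = 0 :=
    mul_eq_zero_of_mul_mul_eq_smul_left (mul_inv_mul_self_eq_smul h3 h4 k)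
      (eq_zero_of_factor_inv_eq_zero h1 h4)
  have cancel_right (k : G) {x : R} : x * Γ k * Γ k⁻¹ = 0 → x * Γ k = 0 :=
    mul_eq_zero_of_mul_mul_eq_smul_right (mul_inv_mul_self_eq_smul h3 h4 k)
      (eq_zero_of_factor_inv_eq_zero h1 h4)
  intro g h
  refine ⟨⟨fun hz => cancel_left g ?_, fun hz => cancel_left g⁻¹ ?_⟩,
    ⟨fun hz => cancel_right h⁻¹ ?_, fun hz => cancel_right h ?_⟩⟩
  · rw [h2, hz, smul_zero]
  · rw [h2, inv_inv, inv_mul_cancel_left, hz, smul_zero]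
  · rw [h3, inv_inv, mul_inv_cancel_right, hz, smul_zero]
  · rw [h3, hz, smul_zero]

/-- Let `Γ : G → R` be a partial projective representation with factor
set `σ`.  Then for all `g, h ∈ G`:
`Γ(g⁻¹)Γ(gh) = 0 ↔ Γ(g)Γ(h) = 0 ↔ Γ(gh)Γ(h⁻¹) = 0`. -/
theorem partialProjRep_null_iff
    {κ G R : Type*} [Field κ] [Group G] [Ring R] [Algebra κ R]
    (Γ : G → R) (σ : G → G → κ)
    (h1 : ∀ g h : G, σ g h = 0 → Γ g⁻¹ * Γ (g * h) = 0 ∧ Γ (g * h) * Γ h⁻¹ = 0)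
    (h2 : ∀ g h : G, Γ g⁻¹ * Γ g * Γ h = σ g h • (Γ g⁻¹ * Γ (g * h)))
    (h3 : ∀ g h : G, Γ g * Γ h * Γ h⁻¹ = σ g h • (Γ (g * h) * Γ h⁻¹))
    (h4 : Γ 1 = 1)
    (hfac : ∀ g h : G, Γ g * Γ h = 0 → σ g h = 0) :
    ∀ g h : G, (Γ g⁻¹ * Γ (g * h) = 0 ↔ Γ g * Γ h = 0) ∧
      (Γ g * Γ h = 0 ↔ Γ (g * h) * Γ h⁻¹ = 0) :=
  partialProjRep_null_iff_general Γ σ h1 h2 h3 h4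
end

section
/- For any ρ ∈ pm(G), the algebras κ_par^{ρ*}G and (κ_par^ρ G)^{op} are isomorphic, where ρ*(g,h) = ρ(h⁻¹,g⁻¹). -/
/-!
Sending `[g]` to `[g⁻¹]` and reversing products turns the defining relations of `κ_par^{ρ*} G`
into those of `κ_par^ρ G` (the `zero_left`/`left` relations trade places with the
`zero_right`/`right` ones), so it defines an algebra map `κ_par^{ρ*} G → (κ_par^ρ G)ᵐᵒᵖ`.
Since `ρ** = ρ`, the same construction gives a map back, and the two are mutually inverse
on generators.
-/

/-- A partial projective representation of a group `G` in a unital `κ`-algebra,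
together with a factor set `σ` for it. -/
structure PartialProjectiveRep (κ : Type) (G : Type) [Field κ] [Group G] where
  carrier : Type
  [ringCarrier : Ring carrier]
  [algCarrier : Algebra κ carrier]
  Γ : G → carrier
  σ : G → G → κ
  cond1 : ∀ g h : G, σ g h = 0 → Γ g⁻¹ * Γ (g * h) = 0 ∧ Γ (g * h) * Γ h⁻¹ = 0
  cond2 : ∀ g h : G, Γ g⁻¹ * Γ g * Γ h = σ g h • (Γ g⁻¹ * Γ (g * h))
  cond3 : ∀ g h : G, Γ g * Γ h * Γ h⁻¹ = σ g h • (Γ (g * h) * Γ h⁻¹)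
  cond4 : Γ 1 = 1
  factor : ∀ g h : G, Γ g * Γ h = 0 → σ g h = 0

/-- `ρ ∈ pm(G)`. -/
def IsPartialFactorSet (κ : Type) (G : Type) [Field κ] [Group G] (ρ : G → G → κ) : Prop :=
  ∃ P : PartialProjectiveRep κ G, P.σ = ρ

/-- The defining relations of the twisted partial group algebra `κ_par^σ G`. -/
inductive TPGARel (κ : Type) (G : Type) [Field κ] [Group G] (σ : G → G → κ) :
    FreeAlgebra κ G → FreeAlgebra κ G → Prop
  | zero_left {g h : G} : σ g h = 0 →
      TPGARel κ G σ (FreeAlgebra.ι κ g⁻¹ * FreeAlgebra.ι κ (g * h)) 0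
  | zero_right {g h : G} : σ g h = 0 →
      TPGARel κ G σ (FreeAlgebra.ι κ (g * h) * FreeAlgebra.ι κ h⁻¹) 0
  | left (g h : G) :
      TPGARel κ G σ (FreeAlgebra.ι κ g⁻¹ * FreeAlgebra.ι κ g * FreeAlgebra.ι κ h)
        (σ g h • (FreeAlgebra.ι κ g⁻¹ * FreeAlgebra.ι κ (g * h)))
  | right (g h : G) :
      TPGARel κ G σ (FreeAlgebra.ι κ g * FreeAlgebra.ι κ h * FreeAlgebra.ι κ h⁻¹)
        (σ g h • (FreeAlgebra.ι κ (g * h) * FreeAlgebra.ι κ h⁻¹))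
  | mul_one (g : G) :
      TPGARel κ G σ (FreeAlgebra.ι κ g * FreeAlgebra.ι κ 1) (FreeAlgebra.ι κ g)
  | one_mul (g : G) :
      TPGARel κ G σ (FreeAlgebra.ι κ 1 * FreeAlgebra.ι κ g) (FreeAlgebra.ι κ g)

/-- The twisted partial group algebra `κ_par^σ G`. -/
abbrev TwistedPartialGroupAlgebra (κ : Type) (G : Type) [Field κ] [Group G]
    (σ : G → G → κ) : Type :=
  RingQuot (TPGARel κ G σ)

theorem eq_apply_inv_inv_of_eq {G R : Type*} [Group G] {σ τ : G → G → R}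
    (hστ : ∀ g h, τ g h = σ h⁻¹ g⁻¹) (g h : G) : σ g h = τ h⁻¹ g⁻¹ := by
  simp [hστ]

namespace TwistedPartialGroupAlgebra

open MulOpposite

variable {κ G : Type} [Field κ] [Group G]

/-- The generator `[g]^σ` of `κ_par^σ G`. -/
noncomputable def of (σ : G → G → κ) (g : G) : TwistedPartialGroupAlgebra κ G σ :=
  RingQuot.mkAlgHom κ (TPGARel κ G σ) (FreeAlgebra.ι κ g)

section Relations

variable {σ : G → G → κ}

theorem of_inv_mul_of_mul_eq_zero {g h : G} (hgh : σ g h = 0) :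
    of σ g⁻¹ * of σ (g * h) = 0 := by
  simpa [of] using RingQuot.mkAlgHom_rel κ (TPGARel.zero_left hgh)

theorem of_mul_mul_of_inv_eq_zero {g h : G} (hgh : σ g h = 0) :
    of σ (g * h) * of σ h⁻¹ = 0 := by
  simpa [of] using RingQuot.mkAlgHom_rel κ (TPGARel.zero_right hgh)

theorem of_inv_mul_of_mul_of (g h : G) :
    of σ g⁻¹ * of σ g * of σ h = σ g h • (of σ g⁻¹ * of σ (g * h)) := by
  simpa [of] using RingQuot.mkAlgHom_rel κ (TPGARel.left (σ := σ) g h)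

theorem of_mul_of_mul_of_inv (g h : G) :
    of σ g * of σ h * of σ h⁻¹ = σ g h • (of σ (g * h) * of σ h⁻¹) := by
  simpa [of] using RingQuot.mkAlgHom_rel κ (TPGARel.right (σ := σ) g h)

theorem of_mul_of_one (g : G) : of σ g * of σ 1 = of σ g := by
  simpa [of] using RingQuot.mkAlgHom_rel κ (TPGARel.mul_one (σ := σ) g)

theorem of_one_mul_of (g : G) : of σ 1 * of σ g = of σ g := by
  simpa [of] using RingQuot.mkAlgHom_rel κ (TPGARel.one_mul (σ := σ) g)

end Relations

section Lift

variable {A : Type*} [Semiring A] [Algebra κ A] (σ : G → G → κ) (Γ : G → A)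

noncomputable def lift
    (zero_left : ∀ g h, σ g h = 0 → Γ g⁻¹ * Γ (g * h) = 0)
    (zero_right : ∀ g h, σ g h = 0 → Γ (g * h) * Γ h⁻¹ = 0)
    (left : ∀ g h, Γ g⁻¹ * Γ g * Γ h = σ g h • (Γ g⁻¹ * Γ (g * h)))
    (right : ∀ g h, Γ g * Γ h * Γ h⁻¹ = σ g h • (Γ (g * h) * Γ h⁻¹))
    (mul_one : ∀ g, Γ g * Γ 1 = Γ g) (one_mul : ∀ g, Γ 1 * Γ g = Γ g) :
    TwistedPartialGroupAlgebra κ G σ →ₐ[κ] A :=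
  RingQuot.liftAlgHom κ ⟨FreeAlgebra.lift κ Γ, fun {x y} r => by
    induction r <;> simp [*]⟩

@[simp]
theorem lift_of {zero_left zero_right left right mul_one one_mul} (g : G) :
    lift σ Γ zero_left zero_right left right mul_one one_mul (of σ g) = Γ g := by
  rw [lift, of, RingQuot.liftAlgHom_mkAlgHom_apply, FreeAlgebra.lift_ι_apply]

end Lift

theorem algHom_ext {σ : G → G → κ} {A : Type*} [Semiring A] [Algebra κ A]
    {f₁ f₂ : TwistedPartialGroupAlgebra κ G σ →ₐ[κ] A} (h : ∀ g, f₁ (of σ g) = f₂ (of σ g)) :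
    f₁ = f₂ :=
  RingQuot.ringQuot_ext' κ _ _ (FreeAlgebra.hom_ext (funext h))

variable (σ τ : G → G → κ) (hστ : ∀ g h, τ g h = σ h⁻¹ g⁻¹)

noncomputable def opHom :
    TwistedPartialGroupAlgebra κ G τ →ₐ[κ] (TwistedPartialGroupAlgebra κ G σ)ᵐᵒᵖ :=
  lift τ (fun g => op (of σ g⁻¹))
    (fun g h hgh => by
      rw [hστ] at hgh
      simpa [← op_mul] using of_mul_mul_of_inv_eq_zero hgh)
    (fun g h hgh => by
      rw [hστ] at hgh
      simpa [← op_mul] using of_inv_mul_of_mul_eq_zero hgh)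
    (fun g h => by
      simpa [hστ, ← op_mul, ← op_smul, mul_assoc] using
        congrArg op (of_mul_of_mul_of_inv (σ := σ) h⁻¹ g⁻¹))
    (fun g h => by
      simpa [hστ, ← op_mul, ← op_smul, mul_assoc] using
        congrArg op (of_inv_mul_of_mul_of (σ := σ) h⁻¹ g⁻¹))
    (fun g => by simpa [← op_mul] using congrArg op (of_one_mul_of (σ := σ) g⁻¹))
    (fun g => by simpa [← op_mul] using congrArg op (of_mul_of_one (σ := σ) g⁻¹))

@[simp]
theorem opHom_of (g : G) : opHom σ τ hστ (of τ g) = op (of σ g⁻¹) :=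
  lift_of _ _ g

noncomputable def opEquiv :
    TwistedPartialGroupAlgebra κ G τ ≃ₐ[κ] (TwistedPartialGroupAlgebra κ G σ)ᵐᵒᵖ :=
  AlgEquiv.ofAlgHom (opHom σ τ hστ) (AlgHom.opComm (opHom τ σ (eq_apply_inv_inv_of_eq hστ)))
    (AlgHom.op.symm.injective (algHom_ext fun g => by simp [AlgHom.opComm]))
    (algHom_ext fun g => by simp [AlgHom.opComm])

end TwistedPartialGroupAlgebra

theorem twistedPartialGroupAlgebra_involution_iso_general
    {κ G : Type} [Field κ] [Group G] (ρ : G → G → κ) :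
    Nonempty (TwistedPartialGroupAlgebra κ G (fun g h => ρ h⁻¹ g⁻¹) ≃ₐ[κ]
      (TwistedPartialGroupAlgebra κ G ρ)ᵐᵒᵖ) :=
  ⟨TwistedPartialGroupAlgebra.opEquiv ρ _ fun _ _ => rfl⟩

/-- For any `ρ ∈ pm(G)`, the algebras `κ_par^{ρ*}G` and
`(κ_par^ρ G)ᵒᵖ` are isomorphic, where `ρ*(g,h) = ρ(h⁻¹,g⁻¹)`. -/
theorem twistedPartialGroupAlgebra_involution_iso
    {κ G : Type} [Field κ] [Group G] (ρ : G → G → κ)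
    (hpm : IsPartialFactorSet κ G ρ) :
    Nonempty (TwistedPartialGroupAlgebra κ G (fun g h => ρ h⁻¹ g⁻¹) ≃ₐ[κ]
      (TwistedPartialGroupAlgebra κ G ρ)ᵐᵒᵖ) :=
  twistedPartialGroupAlgebra_involution_iso_general ρ
end
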